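/- Let β be real with β > 0 and β ≠ 1 and let y > 0. Then for all reals x > 0 and x′ > 0, d̂_β(y, x) ≤ d̂_β(y, x′) + ([β<1]·(x′)^(β−1) − [β>2]·y·(x′)^(β−2))·(x − x′); that is, the concave part of the β-divergence lies below its tangent line at x′. -/

import Mathlib

open Real

/-- The concave part `d̂_β(y, x) = [β<1]·x^β/β − [β>2]·y·x^(β−1)/(β−1)`. -/
noncomputable def betaDivHat (β y x : ℝ) : ℝ :=
  (if β < 1 then x ^ β / β else 0) - (if 2 < β then y * x ^ (β - 1) / (β - 1) else 0)

/-! For `β < 1` the map `x ↦ x ^ β / β` is concave, and for `β > 2` the subtracted map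
`x ↦ y x ^ (β - 1) / (β - 1)` is convex, so in both cases `d̂_β(y, ·)` lies below its tangents.
Both tangent-line bounds for `x ↦ x ^ p` are Bernoulli's inequality for `(x / x') ^ p`,
rescaled by `x' ^ p`. -/

namespace Real

variable {p x x' : ℝ}

lemma one_add_mul_div_sub_one_mul_rpow (hx' : 0 < x') :
    (1 + p * (x / x' - 1)) * x' ^ p = x' ^ p + p * x' ^ (p - 1) * (x - x') := by
  rw [rpow_sub_one hx'.ne']
  field_simp

lemma rpow_le_tangent (hp₀ : 0 ≤ p) (hp₁ : p ≤ 1) (hx : 0 ≤ x) (hx' : 0 < x') :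
    x ^ p ≤ x' ^ p + p * x' ^ (p - 1) * (x - x') := by
  have hbernoulli : (x / x') ^ p ≤ 1 + p * (x / x' - 1) := by
    simpa using rpow_one_add_le_one_add_mul_self (s := x / x' - 1)
      (by linarith [div_nonneg hx hx'.le]) hp₀ hp₁
  rw [div_rpow hx hx'.le, div_le_iff₀ (rpow_pos_of_pos hx' p)] at hbernoulli
  exact hbernoulli.trans_eq (one_add_mul_div_sub_one_mul_rpow hx')

lemma tangent_le_rpow (hp : 1 ≤ p) (hx : 0 ≤ x) (hx' : 0 < x') :
    x' ^ p + p * x' ^ (p - 1) * (x - x') ≤ x ^ p := by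
  have hbernoulli : 1 + p * (x / x' - 1) ≤ (x / x') ^ p := by
    simpa using one_add_mul_self_le_rpow_one_add (s := x / x' - 1)
      (by linarith [div_nonneg hx hx'.le]) hp
  rw [div_rpow hx hx'.le, le_div_iff₀ (rpow_pos_of_pos hx' p)] at hbernoulli
  exact (one_add_mul_div_sub_one_mul_rpow hx').symm.trans_le hbernoulli

end Real

theorem betaDivHat_le_tangent_general (β : ℝ) (hβ : 0 < β) (y : ℝ) (hy : 0 < y)
    (x x' : ℝ) (hx : 0 < x) (hx' : 0 < x') :
    betaDivHat β y x
      ≤ betaDivHat β y x'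
        + ((if β < 1 then x' ^ (β - 1) else 0) - (if 2 < β then y * x' ^ (β - 2) else 0))
          * (x - x') := by
  unfold betaDivHat
  by_cases h₁ : β < 1
  · have h₂ : ¬2 < β := by linarith
    simp only [if_pos h₁, if_neg h₂, sub_zero]
    have key := div_le_div_of_nonneg_right (rpow_le_tangent hβ.le h₁.le hx.le hx') hβ.le
    rwa [add_div, mul_assoc, mul_div_cancel_left₀ _ hβ.ne'] at key
  by_cases h₂ : 2 < β
  · simp only [if_neg h₁, if_pos h₂, zero_sub]
    have hβ₁ : 0 < β - 1 := by linarith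
    have key := div_le_div_of_nonneg_right
      (tangent_le_rpow (p := β - 1) (by linarith) hx.le hx') hβ₁.le
    rw [add_div, mul_assoc, mul_div_cancel_left₀ _ hβ₁.ne', sub_sub, one_add_one_eq_two] at key
    have hscaled := mul_le_mul_of_nonneg_left key hy.le
    rw [mul_add] at hscaled
    simp only [mul_div_assoc]
    linarith
  · simp only [if_neg h₁, if_neg h₂, sub_zero, zero_mul, add_zero, le_refl]

/-- The concave part of the β-divergence lies below its tangent line at `x′`:
`d̂_β(y, x) ≤ d̂_β(y, x′) + ([β<1]·(x′)^(β−1) − [β>2]·y·(x′)^(β−2))·(x − x′)`. -/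
theorem betaDivHat_le_tangent (β : ℝ) (hβ : 0 < β) (hβ1 : β ≠ 1) (y : ℝ) (hy : 0 < y)
    (x x' : ℝ) (hx : 0 < x) (hx' : 0 < x') :
    betaDivHat β y x
      ≤ betaDivHat β y x'
        + ((if β < 1 then x' ^ (β - 1) else 0) - (if 2 < β then y * x' ^ (β - 2) else 0))
          * (x - x') :=
  betaDivHat_le_tangent_general β hβ y hy x x' hx hx'
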